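/- For operations a, b in a history with p = b.proc, a ⟶rb b if and only if there exists a finite chain a = h₀, h₁, …, h_q, h_{q+1} = b such that each h_{i+1} is the direct p-successor of h_i (i.e., h_{i+1} runs on process p, h_i.rtime < h_{i+1}.stime, and no operation on process p starts strictly between h_i.rtime and h_{i+1}.stime). -/
import Mathlib


/-- An operation with a process, a start time and a return time. -/
structure Op (P : Type*) where
  proc : P
  stime : ℝ
  rtime : ℝ
  wellFormed : stime < rtime

/-- Returns-before relation. -/
def rb {P : Type*} (a b : Op P) : Prop := a.rtime < b.stime

/-- `b` is the direct `p`-successor of `a` in the history `H`: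
`b` runs on process `p`, `a` returns before `b` starts, and no
operation of `H` on process `p` lies strictly in between. -/
def dsuc {P : Type*} (H : Finset (Op P)) (p : P) (a b : Op P) : Prop :=
  b.proc = p ∧ rb a b ∧ ¬ ∃ c ∈ H, c.proc = p ∧ rb a c ∧ rb c b

lemma rb_trans {P : Type*} {a b c : Op P} (h1 : rb a b) (h2 : rb b c) : rb a c :=
  lt_trans (lt_trans h1 b.wellFormed) h2

open Classical in
lemma chain_aux {P : Type*} (H : Finset (Op P)) (b : Op P) (hb : b ∈ H) :
    ∀ n (a : Op P), (H.filter (fun c : Op P => c.proc = b.proc ∧ rb a c ∧ rb c b)).card ≤ n →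
    a ∈ H → rb a b →
    ∃ (q : ℕ) (h : ℕ → Op P), h 0 = a ∧ h (q + 1) = b ∧
        (∀ i ≤ q + 1, h i ∈ H) ∧
        (∀ i ≤ q, dsuc H b.proc (h i) (h (i + 1))) := by
  intro n
  induction n with
  | zero =>
    intro a hcard ha hab
    refine ⟨0, fun i => if i = 0 then a else b, by simp, by simp, ?_, ?_⟩
    · intro i _; dsimp only; split <;> assumption
    · intro i hi
      interval_cases i
      simp only [if_pos rfl, if_neg one_ne_zero]
      refine ⟨rfl, hab, ?_⟩
      rintro ⟨c, hcH, hcp, hac, hcb⟩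
      have hc : c ∈ H.filter (fun c : Op P => c.proc = b.proc ∧ rb a c ∧ rb c b) :=
        Finset.mem_filter.2 ⟨hcH, hcp, hac, hcb⟩
      have := Finset.card_pos.2 ⟨c, hc⟩
      omega
  | succ n ih =>
    intro a hcard ha hab
    set S := H.filter (fun c : Op P => c.proc = b.proc ∧ rb a c ∧ rb c b) with hS
    by_cases hne : S.Nonempty
    · obtain ⟨c, hcS, hcmin⟩ := S.exists_min_image (fun c => c.stime) hne
      obtain ⟨hcH, hcp, hac, hcb⟩ := Finset.mem_filter.1 hcS
      have hdsuc : dsuc H b.proc a c := by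
        refine ⟨hcp, hac, ?_⟩
        rintro ⟨d, hdH, hdp, had, hdc⟩
        have hdS : d ∈ S := Finset.mem_filter.2 ⟨hdH, hdp, had, rb_trans hdc hcb⟩
        have h1 := hcmin d hdS
        have h2 : d.rtime < c.stime := hdc
        have h3 := d.wellFormed
        linarith
      have hsub : H.filter (fun d : Op P => d.proc = b.proc ∧ rb c d ∧ rb d b) ⊂ S := by
        constructor
        · intro d hd
          obtain ⟨hdH, hdp, hcd, hdb⟩ := Finset.mem_filter.1 hd
          exact Finset.mem_filter.2 ⟨hdH, hdp, rb_trans hac hcd, hdb⟩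
        · intro hsub'
          have hmem := Finset.mem_filter.1 (hsub' hcS)
          have h1 : rb c c := hmem.2.2.1
          have h2 := c.wellFormed
          simp only [rb] at h1
          linarith
      have hlt := Finset.card_lt_card hsub
      obtain ⟨q, h, h0, hq1, hmem, hstep⟩ := ih c (by omega) hcH hcb
      refine ⟨q + 1, fun i => if i = 0 then a else h (i - 1), by simp, ?_, ?_, ?_⟩
      · simpa using hq1
      · intro i hi; dsimp only; split
        · exact ha
        · exact hmem _ (by omega)
      · intro i hi
        dsimp only
        rcases Nat.eq_zero_or_pos i with h0' | hpos
        · subst h0'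
          simp only [if_pos rfl, if_neg one_ne_zero]
          simpa [h0] using hdsuc
        · rw [if_neg (by omega), if_neg (by omega)]
          have heq : i + 1 - 1 = (i - 1) + 1 := by omega
          rw [heq]
          exact hstep _ (by omega)
    · have hz : S.card = 0 := by
        rw [Finset.card_eq_zero, ← Finset.not_nonempty_iff_eq_empty]
        exact hne
      rw [hS] at hz
      exact ih a (by omega) ha hab

/-- `a ⟶rb b` iff there is a finite chain `a = h₀, h₁, …, h_q, h_{q+1} = b`
where each step is a direct `b.proc`-successor step (through operations
of `H`). -/
theorem rb_iff_dsuc_chain {P : Type*} (H : Finset (Op P))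
    (hdistinct : ∀ a ∈ H, ∀ b ∈ H, a ≠ b →
      a.stime ≠ b.stime ∧ a.stime ≠ b.rtime ∧
      a.rtime ≠ b.stime ∧ a.rtime ≠ b.rtime)
    (a : Op P) (ha : a ∈ H) (b : Op P) (hb : b ∈ H) :
    rb a b ↔
      ∃ (q : ℕ) (h : ℕ → Op P), h 0 = a ∧ h (q + 1) = b ∧
        (∀ i ≤ q + 1, h i ∈ H) ∧
        (∀ i ≤ q, dsuc H b.proc (h i) (h (i + 1))) := by
  constructor
  · intro hab
    exact chain_aux H b hb _ a le_rfl ha hab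
  · rintro ⟨q, h, h0, hq1, hmem, hstep⟩
    have key : ∀ i ≤ q, rb (h 0) (h (i + 1)) := by
      intro i
      induction i with
      | zero => intro _; exact (hstep 0 (by omega)).2.1
      | succ j ihj =>
        intro hj
        exact rb_trans (ihj (by omega)) (hstep (j + 1) hj).2.1
    have := key q le_rfl
    rwa [h0, hq1] at this
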